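/- arXiv:math-ph/0103031 — 3 statements merged into one kernel-verified Lean document; each statement's English description precedes it below -/
import Mathlib

section
/- Let h be analytic on an open neighborhood U ⊆ ℂ of x₀, let μ ∈ ℂ, and let u be analytic on U with u''(x) + h(x)·u(x) = 0 on U, u(x₀) = 0 and u'(x₀) = 1. Define H(x) = μ − h(x) − 2·(u'(x)/u(x))² on a punctured neighborhood of x₀. Then the function H(x) + 2/(x − x₀)² extends analytically across x₀, its value at x₀ equals μ + h(x₀)/3, and its first derivative at x₀ equals 0 (equivalently, H(x) = −2/(x−x₀)² + (μ + h(x₀)/3) + O((x−x₀)²)). -/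
open Filter Topology

private lemma analyticAt_dslope_center {f : ℂ → ℂ} {a : ℂ} (hf : AnalyticAt ℂ f a) :
    AnalyticAt ℂ (dslope f a) a := by
  obtain ⟨p, hp⟩ := hf
  exact ⟨p.fslope, hp.has_fpower_series_dslope_fslope⟩

private lemma analyticOnNhd_dslope {f : ℂ → ℂ} {a : ℂ} {U : Set ℂ}
    (hf : AnalyticOnNhd ℂ f U) (ha : a ∈ U) :
    AnalyticOnNhd ℂ (dslope f a) U := by
  intro z hz
  rcases eq_or_ne z a with rfl | hne
  · exact analyticAt_dslope_center (hf z hz)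
  · have h1 : AnalyticAt ℂ (fun y => (y - a)⁻¹ * (f y - f a)) z := by
      exact ((analyticAt_id.sub analyticAt_const).inv (sub_ne_zero.mpr hne)).mul
        ((hf z hz).sub analyticAt_const)
    apply h1.congr
    filter_upwards [isOpen_ne.mem_nhds hne] with y hy
    rw [dslope_of_ne f hy, slope]
    simp [vsub_eq_sub, smul_eq_mul]

private lemma deriv_dslope_center {f : ℂ → ℂ} {a : ℂ} (hf : AnalyticAt ℂ f a) :
    deriv (dslope f a) a = iteratedDeriv 2 f a / 2 := by
  obtain ⟨p, hp⟩ := hf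
  have h1 : deriv (dslope f a) a = p.coeff 2 := by
    rw [hp.has_fpower_series_dslope_fslope.deriv]
    exact p.coeff_fslope
  obtain ⟨r, hr⟩ := hp
  have h2 := hr.factorial_smul (1 : ℂ) 2
  rw [← iteratedDeriv_eq_iteratedFDeriv] at h2
  have h3 : (Nat.factorial 2) • p.coeff 2 = iteratedDeriv 2 f a := h2
  rw [h1]
  rw [← h3]
  simp [Nat.factorial]

private lemma iteratedDeriv_two' (f : ℂ → ℂ) : iteratedDeriv 2 f = deriv (deriv f) := by
  rw [show (2:ℕ) = 1 + 1 from rfl, iteratedDeriv_succ, iteratedDeriv_one]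

/-- local form of the new coefficient after one step of the recursion.
If `h` is analytic near `x₀` and `u` solves `u'' + h·u = 0` with `u(x₀) = 0`,
`u'(x₀) = 1`, then `H(x) = μ − h(x) − 2(u'(x)/u(x))²` satisfies
`H(x) = −2/(x−x₀)² + (μ + h(x₀)/3) + O((x−x₀)²)`: the function `H(x) + 2/(x−x₀)²`
extends analytically across `x₀`, with value `μ + h(x₀)/3` and derivative `0` at `x₀`. -/
theorem stmt_5 (x₀ : ℂ) (μ : ℂ) (U : Set ℂ) (hU : IsOpen U) (hx₀ : x₀ ∈ U)
    (h u : ℂ → ℂ) (hh : AnalyticOnNhd ℂ h U) (hu : AnalyticOnNhd ℂ u U)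
    (hode : ∀ x ∈ U, iteratedDeriv 2 u x + h x * u x = 0)
    (hu0 : u x₀ = 0) (hu1 : deriv u x₀ = 1) :
    ∃ G : ℂ → ℂ, AnalyticAt ℂ G x₀ ∧
      (∀ᶠ x in nhdsWithin x₀ {x₀}ᶜ,
        G x = (μ - h x - 2 * (deriv u x / u x) ^ 2) + 2 / (x - x₀) ^ 2) ∧
      G x₀ = μ + h x₀ / 3 ∧
      deriv G x₀ = 0 := by
  have hh' : AnalyticOnNhd ℂ (deriv h) U := hh.deriv
  set v : ℂ → ℂ := dslope u x₀ with hv_def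
  have hv : AnalyticOnNhd ℂ v U := analyticOnNhd_dslope hu hx₀
  have hv' : AnalyticOnNhd ℂ (deriv v) U := hv.deriv
  have hv'' : AnalyticOnNhd ℂ (deriv (deriv v)) U := hv'.deriv
  have hv''' : AnalyticOnNhd ℂ (deriv (deriv (deriv v))) U := hv''.deriv
  set w : ℂ → ℂ := dslope (deriv v) x₀ with hw_def
  have hw : AnalyticOnNhd ℂ w U := analyticOnNhd_dslope hv' hx₀
  -- u = (x - x₀) * v
  have hueq : u = fun x => (x - x₀) * v x := by
    funext x
    have hs := sub_smul_dslope u x₀ x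
    rw [smul_eq_mul, hu0, sub_zero] at hs
    exact hs.symm
  have hvx₀ : v x₀ = 1 := by rw [hv_def, dslope_same, hu1]
  -- derivative identities
  have d1 : ∀ x ∈ U, deriv u x = v x + (x - x₀) * deriv v x := by
    intro x hx
    rw [hueq]
    have H : HasDerivAt (fun y => (y - x₀) * v y)
        (1 * v x + (x - x₀) * deriv v x) x :=
      (((hasDerivAt_id x).sub_const x₀)).mul (hv x hx).differentiableAt.hasDerivAt
    rw [H.deriv]; ring
  have d2 : ∀ x ∈ U, deriv (deriv u) x = 2 * deriv v x + (x - x₀) * deriv (deriv v) x := by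
    intro x hx
    have hev : deriv u =ᶠ[𝓝 x] fun y => v y + (y - x₀) * deriv v y := by
      filter_upwards [hU.mem_nhds hx] with y hy using d1 y hy
    rw [hev.deriv_eq]
    have H : HasDerivAt (fun y => v y + (y - x₀) * deriv v y)
        (deriv v x + (1 * deriv v x + (x - x₀) * deriv (deriv v) x)) x :=
      (hv x hx).differentiableAt.hasDerivAt.add
        (((hasDerivAt_id x).sub_const x₀).mul (hv' x hx).differentiableAt.hasDerivAt)
    rw [H.deriv]; ring
  have d3 : ∀ x ∈ U, deriv (deriv (deriv u)) x
      = 3 * deriv (deriv v) x + (x - x₀) * deriv (deriv (deriv v)) x := by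
    intro x hx
    have hev : deriv (deriv u) =ᶠ[𝓝 x] fun y => 2 * deriv v y + (y - x₀) * deriv (deriv v) y := by
      filter_upwards [hU.mem_nhds hx] with y hy using d2 y hy
    rw [hev.deriv_eq]
    have H : HasDerivAt (fun y => 2 * deriv v y + (y - x₀) * deriv (deriv v) y)
        (2 * deriv (deriv v) x + (1 * deriv (deriv v) x + (x - x₀) * deriv (deriv (deriv v)) x)) x :=
      ((hv' x hx).differentiableAt.hasDerivAt.const_mul 2).add
        (((hasDerivAt_id x).sub_const x₀).mul (hv'' x hx).differentiableAt.hasDerivAt)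
    rw [H.deriv]; ring
  have d4 : deriv (deriv (deriv (deriv u))) x₀ = 4 * deriv (deriv (deriv v)) x₀ := by
    have hev : deriv (deriv (deriv u)) =ᶠ[𝓝 x₀]
        fun y => 3 * deriv (deriv v) y + (y - x₀) * deriv (deriv (deriv v)) y := by
      filter_upwards [hU.mem_nhds hx₀] with y hy using d3 y hy
    rw [hev.deriv_eq]
    have H : HasDerivAt (fun y => 3 * deriv (deriv v) y + (y - x₀) * deriv (deriv (deriv v)) y)
        (3 * deriv (deriv (deriv v)) x₀ +
          (1 * deriv (deriv (deriv v)) x₀ + (x₀ - x₀) * deriv (deriv (deriv (deriv v))) x₀)) x₀ :=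
      ((hv'' x₀ hx₀).differentiableAt.hasDerivAt.const_mul 3).add
        (((hasDerivAt_id x₀).sub_const x₀).mul (hv''' x₀ hx₀).differentiableAt.hasDerivAt)
    rw [H.deriv]; ring
  -- ODE side
  have e2 : ∀ x ∈ U, deriv (deriv u) x = -(h x * u x) := by
    intro x hx
    have := hode x hx
    rw [iteratedDeriv_two'] at this
    linear_combination this
  have e3 : ∀ x ∈ U, deriv (deriv (deriv u)) x = -(deriv h x * u x + h x * deriv u x) := by
    intro x hx
    have hev : deriv (deriv u) =ᶠ[𝓝 x] fun y => -(h y * u y) := by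
      filter_upwards [hU.mem_nhds hx] with y hy using e2 y hy
    rw [hev.deriv_eq]
    have H : HasDerivAt (fun y => -(h y * u y))
        (-(deriv h x * u x + h x * deriv u x)) x :=
      ((hh x hx).differentiableAt.hasDerivAt.mul (hu x hx).differentiableAt.hasDerivAt).neg
    rw [H.deriv]
  have e4 : deriv (deriv (deriv (deriv u))) x₀
      = -((deriv (deriv h) x₀ * u x₀ + deriv h x₀ * deriv u x₀)
          + (deriv h x₀ * deriv u x₀ + h x₀ * deriv (deriv u) x₀)) := by
    have hev : deriv (deriv (deriv u)) =ᶠ[𝓝 x₀]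
        fun y => -(deriv h y * u y + h y * deriv u y) := by
      filter_upwards [hU.mem_nhds hx₀] with y hy using e3 y hy
    rw [hev.deriv_eq]
    have H : HasDerivAt (fun y => -(deriv h y * u y + h y * deriv u y))
        (-((deriv (deriv h) x₀ * u x₀ + deriv h x₀ * deriv u x₀)
          + (deriv h x₀ * deriv u x₀ + h x₀ * deriv (deriv u) x₀))) x₀ :=
      (((hh' x₀ hx₀).differentiableAt.hasDerivAt.mul (hu x₀ hx₀).differentiableAt.hasDerivAt).add
        ((hh x₀ hx₀).differentiableAt.hasDerivAt.mul
          (hu.deriv x₀ hx₀).differentiableAt.hasDerivAt)).neg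
    rw [H.deriv]
  -- values at x₀
  have val_u2 : deriv (deriv u) x₀ = 0 := by rw [e2 x₀ hx₀, hu0, mul_zero, neg_zero]
  have val_v1 : deriv v x₀ = 0 := by
    have := d2 x₀ hx₀
    rw [val_u2] at this
    have h0 : (x₀ - x₀) = 0 := sub_self x₀
    rw [h0, zero_mul, add_zero] at this
    linear_combination -this / 2
  have val_u3 : deriv (deriv (deriv u)) x₀ = -h x₀ := by
    rw [e3 x₀ hx₀, hu0, hu1]; ring
  have val_v2 : 3 * deriv (deriv v) x₀ = -h x₀ := by
    have := d3 x₀ hx₀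
    rw [val_u3, sub_self, zero_mul, add_zero] at this
    linear_combination -this
  have val_u4 : deriv (deriv (deriv (deriv u))) x₀ = -(2 * deriv h x₀) := by
    rw [e4, hu0, hu1, val_u2]; ring
  have val_v3 : 4 * deriv (deriv (deriv v)) x₀ = -(2 * deriv h x₀) := by
    rw [← val_u4, d4]
  -- facts about w
  have hwx₀ : 3 * w x₀ = -h x₀ := by rw [hw_def, dslope_same]; exact val_v2
  have hw'x₀ : 8 * deriv w x₀ = -(2 * deriv h x₀) := by
    rw [hw_def, deriv_dslope_center (hv' x₀ hx₀), iteratedDeriv_two']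
    rw [← val_v3]; ring
  have hveq : ∀ x, deriv v x = (x - x₀) * w x := by
    intro x
    have hs := sub_smul_dslope (deriv v) x₀ x
    rw [smul_eq_mul, val_v1, sub_zero] at hs
    exact hs.symm
  -- the extension
  set G : ℂ → ℂ := fun x => μ - h x - 4 * (w x / v x) - 2 * ((x - x₀) ^ 2 * (w x / v x) ^ 2)
    with hG_def
  have hvne0 : v x₀ ≠ 0 := by rw [hvx₀]; exact one_ne_zero
  have hq : AnalyticAt ℂ (fun x => w x / v x) x₀ := (hw x₀ hx₀).div (hv x₀ hx₀) hvne0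
  refine ⟨G, ?_, ?_, ?_, ?_⟩
  · exact ((analyticAt_const.sub (hh x₀ hx₀)).sub (analyticAt_const.mul hq)).sub
      (analyticAt_const.mul
        ((((analyticAt_id.sub analyticAt_const).pow 2)).mul (hq.pow 2)))
  · have hvne : ∀ᶠ x in 𝓝 x₀, v x ≠ 0 :=
      (hv x₀ hx₀).continuousAt.eventually_ne (by rw [hvx₀]; exact one_ne_zero)
    filter_upwards [mem_nhdsWithin_of_mem_nhds (hU.mem_nhds hx₀),
      mem_nhdsWithin_of_mem_nhds hvne, self_mem_nhdsWithin] with x hxU hvx hne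
    have hne' : x ≠ x₀ := hne
    have ht : x - x₀ ≠ 0 := sub_ne_zero.mpr hne'
    have hux : u x = (x - x₀) * v x := by rw [hueq]
    have hdux : deriv u x = v x + (x - x₀) * ((x - x₀) * w x) := by
      rw [d1 x hxU, hveq x]
    rw [hG_def]
    simp only []
    rw [hux, hdux]
    field_simp
    ring
  · rw [hG_def]
    simp only []
    rw [hvx₀, sub_self]
    field_simp
    linear_combination (-4 : ℂ) * hwx₀
  · have Hh : HasDerivAt h (deriv h x₀) x₀ := (hh x₀ hx₀).differentiableAt.hasDerivAt
    have Hw : HasDerivAt w (deriv w x₀) x₀ := (hw x₀ hx₀).differentiableAt.hasDerivAt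
    have Hv : HasDerivAt v (deriv v x₀) x₀ := (hv x₀ hx₀).differentiableAt.hasDerivAt
    have Hq : HasDerivAt (fun x => w x / v x)
        ((deriv w x₀ * v x₀ - w x₀ * deriv v x₀) / v x₀ ^ 2) x₀ := Hw.div Hv hvne0
    have Ht : HasDerivAt (fun y => (y - x₀) ^ 2) ((2 : ℕ) * (x₀ - x₀) ^ (2 - 1) * 1) x₀ :=
      ((hasDerivAt_id x₀).sub_const x₀).pow 2
    have Hq2 : HasDerivAt (fun x => (w x / v x) ^ 2)
        ((2 : ℕ) * (w x₀ / v x₀) ^ (2 - 1) *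
          ((deriv w x₀ * v x₀ - w x₀ * deriv v x₀) / v x₀ ^ 2)) x₀ := Hq.pow 2
    have HG : HasDerivAt G
        ((0 - deriv h x₀ - 4 * ((deriv w x₀ * v x₀ - w x₀ * deriv v x₀) / v x₀ ^ 2))
          - 2 * (((2 : ℕ) * (x₀ - x₀) ^ (2 - 1) * 1) * (w x₀ / v x₀) ^ 2
            + (x₀ - x₀) ^ 2 * ((2 : ℕ) * (w x₀ / v x₀) ^ (2 - 1) *
              ((deriv w x₀ * v x₀ - w x₀ * deriv v x₀) / v x₀ ^ 2)))) x₀ := by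
      exact (((hasDerivAt_const x₀ μ).sub Hh).sub (Hq.const_mul 4)).sub
        ((Ht.mul Hq2).const_mul 2)
    rw [HG.deriv]
    rw [hvx₀, val_v1, sub_self]
    push_cast
    field_simp
    linear_combination (-1/2 : ℂ) * hw'x₀
end

section
/- Let N ≥ 2 be an integer, x₀ ∈ ℂ, μ ∈ ℂ, and let h have form (F_N) at x₀ (h analytic on a punctured disc around x₀, h(x) + N(N−1)/(x−x₀)² extending analytically across x₀ with odd Taylor coefficients of orders 1, …, 2N−3 vanishing). Let u be a solution of u'' + h·u = 0 of the recessive form u(x) = (x−x₀)^N·φ(x), where φ is analytic at x₀, φ(x₀) = 1, and the odd-order Taylor coefficients of φ of orders 1, 3, …, 2N−1 vanish. Then the function h̃(x) := μ − h(x) − 2·(u'(x)/u(x))² has form (F_{N+1}) at x₀: h̃(x) + (N+1)N/(x−x₀)² extends analytically across x₀ and the odd-order Taylor coefficients of this extension of orders 1, 3, …, 2N−1 vanish. -/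
/-!
Write `u = (x - x₀)^N φ` and `ψ = φ'/φ`, so that `u'/u = N/(x - x₀) + ψ`. The equation gives
`h = -u''/u`, and with the Riccati identity `(u'/u)' = u''/u - (u'/u)²` the function
`μ - h - 2(u'/u)² + (N+1)N/(x - x₀)²` becomes `μ + ψ' - ψ² - 2N ψ/(x - x₀)`, which is analytic at
`x₀` because `ψ(x₀) = 0`. As the odd Taylor coefficients of `φ` vanish up to order `2N - 1`, the
even ones of `ψ` vanish up to order `2N - 2`, so `ψ'` and `ψ²` have no odd coefficients below
order `2N`, and neither does `ψ/(x - x₀)` below order `2N - 1`. At order `2N - 1` the coefficient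
of `2N ψ/(x - x₀)` is that of `ψ'`, and the two cancel.
-/

open Filter Topology
open scoped ContDiff

section
variable {𝕜 : Type*} [NontriviallyNormedField 𝕜] {f g : 𝕜 → 𝕜} {x : 𝕜} {m : ℕ}

def OddDerivsVanish (m : ℕ) (f : 𝕜 → 𝕜) (x : 𝕜) : Prop :=
  ∀ j < m, iteratedDeriv (2 * j + 1) f x = 0

def EvenDerivsVanish (m : ℕ) (f : 𝕜 → 𝕜) (x : 𝕜) : Prop :=
  ∀ j < m, iteratedDeriv (2 * j) f x = 0

theorem EvenDerivsVanish.mul (hf : EvenDerivsVanish m f x) (hg : EvenDerivsVanish m g x)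
    (hf' : ContDiffAt 𝕜 ∞ f x) (hg' : ContDiffAt 𝕜 ∞ g x) :
    OddDerivsVanish m (fun y => f y * g y) x := by
  intro j hj
  rw [iteratedDeriv_fun_mul (contDiffAt_infty.mp hf' _) (contDiffAt_infty.mp hg' _)]
  refine Finset.sum_eq_zero fun i hi => ?_
  have hi : i ≤ 2 * j + 1 := Finset.mem_range_succ_iff.mp hi
  obtain ⟨a, rfl | rfl⟩ := Nat.even_or_odd' i
  · rw [hf a (by omega)]; ring
  · rw [show 2 * j + 1 - (2 * a + 1) = 2 * (j - a) by omega, hg (j - a) (by omega)]; ring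

theorem EvenDerivsVanish.of_mul (hfg : EvenDerivsVanish m (fun y => f y * g y) x)
    (hg : OddDerivsVanish m g x) (hg0 : g x ≠ 0)
    (hf' : ContDiffAt 𝕜 ∞ f x) (hg' : ContDiffAt 𝕜 ∞ g x) :
    EvenDerivsVanish m f x := by
  intro j hj
  induction j using Nat.strong_induction_on with
  | _ j ih =>
    have h := hfg j hj
    rw [iteratedDeriv_fun_mul (contDiffAt_infty.mp hf' _) (contDiffAt_infty.mp hg' _),
      Finset.sum_range_succ, Finset.sum_eq_zero, zero_add] at h
    · simpa [hg0] using h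
    intro i hi
    have hi : i < 2 * j := Finset.mem_range.mp hi
    obtain ⟨a, rfl | rfl⟩ := Nat.even_or_odd' i
    · rw [ih a (by omega) (by omega)]; ring
    · rw [show 2 * j - (2 * a + 1) = 2 * (j - a - 1) + 1 by omega, hg _ (by omega)]; ring

theorem iteratedDeriv_succ_sub_mul (n : ℕ) (hf : ContDiffAt 𝕜 (n + 1) f x) :
    iteratedDeriv (n + 1) (fun y => (y - x) * f y) x = (n + 1) * iteratedDeriv n f x := by
  have hlin : ∀ i, iteratedDeriv (i + 1) (fun y : 𝕜 => y - x) x = if i = 0 then 1 else 0 := by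
    intro i
    rw [iteratedDeriv_succ']
    simp [iteratedDeriv_const]
  rw [iteratedDeriv_fun_mul (by fun_prop) hf, Finset.sum_range_succ']
  simp [hlin]

theorem AnalyticAt.dslope {E : Type*} [NormedAddCommGroup E] [NormedSpace 𝕜 E] {f : 𝕜 → E}
    (hf : AnalyticAt 𝕜 f x) : AnalyticAt 𝕜 (dslope f x) x :=
  let ⟨_, hp⟩ := hf
  ⟨_, hp.has_fpower_series_dslope_fslope⟩

theorem AnalyticAt.logDeriv [CompleteSpace 𝕜] (hf : AnalyticAt 𝕜 f x) (hf0 : f x ≠ 0) :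
    AnalyticAt 𝕜 (logDeriv f) x :=
  hf.deriv.div hf hf0

theorem OddDerivsVanish.evenDerivsVanish_logDeriv [CompleteSpace 𝕜] (hf : OddDerivsVanish m f x)
    (hfa : AnalyticAt 𝕜 f x) (hf0 : f x ≠ 0) : EvenDerivsVanish m (logDeriv f) x := by
  refine EvenDerivsVanish.of_mul (g := f) (fun j hj => ?_) hf hf0 (hfa.logDeriv hf0).contDiffAt
    hfa.contDiffAt
  have hmul : (fun y => logDeriv f y * f y) =ᶠ[𝓝 x] deriv f := by
    filter_upwards [hfa.continuousAt.eventually_ne hf0] with y hy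
    rw [logDeriv_apply, div_mul_cancel₀ _ hy]
  rw [hmul.iteratedDeriv_eq, ← iteratedDeriv_succ']
  exact hf j hj

theorem deriv_logDeriv [CompleteSpace 𝕜] (hf : AnalyticAt 𝕜 f x) (hf0 : f x ≠ 0) :
    deriv (logDeriv f) x = iteratedDeriv 2 f x / f x - logDeriv f x ^ 2 := by
  rw [show logDeriv f = fun y => deriv f y / f y from rfl,
    deriv_fun_div hf.deriv.differentiableAt hf.differentiableAt hf0, iteratedDeriv_succ,
    iteratedDeriv_one]
  field_simp

theorem logDeriv_sub_pow_mul {x₀ : 𝕜} (N : ℕ) (hx : x ≠ x₀) (hf : DifferentiableAt 𝕜 f x)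
    (hf0 : f x ≠ 0) :
    logDeriv (fun y => (y - x₀) ^ N * f y) x = N / (x - x₀) + logDeriv f x := by
  have hx' : x - x₀ ≠ 0 := sub_ne_zero.mpr hx
  rw [logDeriv_mul (f := fun y => (y - x₀) ^ N) x (pow_ne_zero _ hx') hf0 (by fun_prop) hf,
    logDeriv_fun_pow (by fun_prop), logDeriv_apply]
  simp [div_eq_mul_inv]

end

theorem Filter.Eventually.eventually_nhds_of_nhdsNE {X : Type*} [TopologicalSpace X] [T1Space X]
    {a : X} {p : X → Prop} (h : ∀ᶠ y in 𝓝[≠] a, p y) : ∀ᶠ x in 𝓝[≠] a, ∀ᶠ y in 𝓝 x, p y := by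
  filter_upwards [eventually_eventually_nhdsWithin.mpr h, self_mem_nhdsWithin] with x hx hxa
  rwa [isOpen_compl_singleton.nhdsWithin_eq hxa] at hx

section
variable {𝕜 : Type*} [NontriviallyNormedField 𝕜] [CompleteSpace 𝕜]

theorem transformed_potential_add_pole_eq {u φ h : 𝕜 → 𝕜} {x x₀ : 𝕜} (μ : 𝕜) (N : ℕ)
    (hu : u =ᶠ[𝓝 x] fun y => (y - x₀) ^ N * φ y)
    (hφ : ∀ᶠ y in 𝓝 x, y ≠ x₀ ∧ AnalyticAt 𝕜 φ y ∧ φ y ≠ 0)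
    (hode : iteratedDeriv 2 u x + h x * u x = 0) :
    (μ - h x - 2 * (deriv u x / u x) ^ 2) + ((N + 1) * N : 𝕜) / (x - x₀) ^ 2
      = μ + (deriv (logDeriv φ) x - logDeriv φ x ^ 2 - 2 * N * (logDeriv φ x / (x - x₀))) := by
  obtain ⟨hx, hφa, hφ0⟩ := hφ.self_of_nhds
  have hx' : x - x₀ ≠ 0 := sub_ne_zero.mpr hx
  set U : 𝕜 → 𝕜 := fun y => (y - x₀) ^ N * φ y
  have hU0 : U x ≠ 0 := mul_ne_zero (pow_ne_zero _ hx') hφ0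
  have hlog : logDeriv U =ᶠ[𝓝 x] fun y => N / (y - x₀) + logDeriv φ y :=
    hφ.mono fun y ⟨hy, hya, hy0⟩ => logDeriv_sub_pow_mul N hy hya.differentiableAt hy0
  have hderiv : deriv (logDeriv U) x = -N / (x - x₀) ^ 2 + deriv (logDeriv φ) x := by
    have hpole := (hasDerivAt_const x (N : 𝕜)).fun_div ((hasDerivAt_id' x).sub_const x₀) hx'
    rw [hlog.deriv_eq, (hpole.fun_add (hφa.logDeriv hφ0).differentiableAt.hasDerivAt).deriv]
    simp [neg_div]
  have hsecond : iteratedDeriv 2 U x / U x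
      = -N / (x - x₀) ^ 2 + deriv (logDeriv φ) x + (N / (x - x₀) + logDeriv φ x) ^ 2 := by
    rw [← hderiv, deriv_logDeriv (by fun_prop) hU0, hlog.self_of_nhds]
    ring
  rw [hu.iteratedDeriv_eq 2, hu.self_of_nhds] at hode
  have hh : h x = -(iteratedDeriv 2 U x / U x) := by
    field_simp
    linear_combination hode
  rw [hu.deriv_eq, hu.self_of_nhds, ← logDeriv_apply, hlog.self_of_nhds, hh, hsecond]
  field_simp
  ring

theorem EvenDerivsVanish.oddDerivsVanish_deriv_sub_sq_sub_dslope [CharZero 𝕜] {ψ : 𝕜 → 𝕜}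
    {x : 𝕜} {m : ℕ} (hψ : EvenDerivsVanish m ψ x) (hψa : AnalyticAt 𝕜 ψ x) :
    OddDerivsVanish m (fun y => deriv ψ y - ψ y ^ 2 - 2 * m * dslope ψ x y) x := by
  intro j hj
  set Ψ := dslope ψ x
  have hψ0 : ψ x = 0 := hψ 0 (by omega)
  have hψΨ : ψ = fun y => (y - x) * Ψ y := by
    funext y
    rw [← smul_eq_mul, sub_smul_dslope, hψ0, sub_zero]
  have hΨa : AnalyticAt 𝕜 Ψ x := hψa.dslope
  have hsq : iteratedDeriv (2 * j + 1) (fun y => ψ y ^ 2) x = 0 := by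
    simpa only [sq] using hψ.mul hψ hψa.contDiffAt hψa.contDiffAt j hj
  have hpole : 2 * m * iteratedDeriv (2 * j + 1) Ψ x = iteratedDeriv (2 * j + 2) ψ x := by
    have hslope := iteratedDeriv_succ_sub_mul (2 * j + 1) (hΨa.contDiffAt (n := 2 * j + 2))
    rw [← hψΨ] at hslope
    rcases (show j + 1 < m ∨ j + 1 = m by omega) with hlt | rfl
    · have hψ' : iteratedDeriv (2 * j + 2) ψ x = 0 := hψ (j + 1) hlt
      have hΨ' : iteratedDeriv (2 * j + 1) Ψ x = 0 :=
        (mul_eq_zero.mp (hslope.symm.trans hψ')).resolve_left (Nat.cast_add_one_ne_zero _)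
      rw [hΨ', hψ', mul_zero]
    · rw [show 2 * j + 2 = 2 * j + 1 + 1 from rfl, hslope]
      push_cast
      ring
  have hψ'a := hψa.deriv
  rw [iteratedDeriv_fun_sub, iteratedDeriv_fun_sub, iteratedDeriv_const_mul_field, hsq,
    ← iteratedDeriv_succ', hpole, sub_zero, sub_self]
  all_goals exact AnalyticAt.contDiffAt (by fun_prop)

end

theorem stmt_8_general (N : ℕ) (hN : 2 ≤ N) (x₀ μ : ℂ)
    (h : ℂ → ℂ)
    (φ : ℂ → ℂ) (hφ : AnalyticAt ℂ φ x₀) (hφ1 : φ x₀ = 1)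
    (hφodd : ∀ k : ℕ, Odd k → (k : ℤ) ≤ 2 * (N : ℤ) - 1 → iteratedDeriv k φ x₀ = 0)
    (u : ℂ → ℂ)
    (hu : ∀ᶠ x in nhdsWithin x₀ {x₀}ᶜ, u x = (x - x₀) ^ (N : ℤ) * φ x)
    (hode : ∀ᶠ x in nhdsWithin x₀ {x₀}ᶜ, iteratedDeriv 2 u x + h x * u x = 0) :
    ∃ g' : ℂ → ℂ, AnalyticAt ℂ g' x₀ ∧
      (∀ᶠ x in nhdsWithin x₀ {x₀}ᶜ,
        g' x = (μ - h x - 2 * (deriv u x / u x) ^ 2)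
          + ((N + 1) * N : ℂ) / (x - x₀) ^ 2) ∧
      (∀ k : ℕ, Odd k → (k : ℤ) ≤ 2 * (N : ℤ) - 1 → iteratedDeriv k g' x₀ = 0) := by
  have hφ0 : φ x₀ ≠ 0 := by simp [hφ1]
  set ψ := logDeriv φ
  have hψa : AnalyticAt ℂ ψ x₀ := hφ.logDeriv hφ0
  have hψ : EvenDerivsVanish N ψ x₀ :=
    OddDerivsVanish.evenDerivsVanish_logDeriv
      (fun j hj => hφodd _ (odd_two_mul_add_one j) (by omega)) hφ hφ0
  have hψ0 : ψ x₀ = 0 := hψ 0 (by omega)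
  have hslopea := hψa.dslope
  refine ⟨fun y => μ + (deriv ψ y - ψ y ^ 2 - 2 * N * dslope ψ x₀ y), by fun_prop, ?_, ?_⟩
  · have hφnear : ∀ᶠ y in 𝓝[≠] x₀, y ≠ x₀ ∧ AnalyticAt ℂ φ y ∧ φ y ≠ 0 := by
      filter_upwards [self_mem_nhdsWithin,
        nhdsWithin_le_nhds (hφ.eventually_analyticAt.and (hφ.continuousAt.eventually_ne hφ0))]
        with y hy hya using ⟨hy, hya⟩
    have hu' : ∀ᶠ y in 𝓝[≠] x₀, u y = (y - x₀) ^ N * φ y := by simpa using hu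
    filter_upwards [hu'.eventually_nhds_of_nhdsNE, hφnear.eventually_nhds_of_nhdsNE, hode,
      self_mem_nhdsWithin] with x hux hφx hodex hx
    rw [transformed_potential_add_pole_eq μ N hux hφx hodex, dslope_of_ne _ hx, slope_def_field,
      hψ0, sub_zero]
  · rintro _ ⟨j, rfl⟩ hj
    rw [iteratedDeriv_const_add (by omega)]
    exact hψ.oddDerivsVanish_deriv_sub_sq_sub_dslope hψa j (by omega)

/-- Lemma 2 of the paper, recessive case.
Let `N ≥ 2`, let `h` have form `(F_N)` at `x₀`, and let `u` be a solution of
`u'' + h·u = 0` of the recessive form `u(x) = (x−x₀)^N φ(x)` with `φ` analytic at `x₀`,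
`φ(x₀) = 1`, and odd Taylor coefficients of `φ` of orders `1, 3, …, 2N−1` vanishing.
Then `h̃(x) = μ − h(x) − 2(u'(x)/u(x))²` has form `(F_{N+1})` at `x₀`:
`h̃(x) + (N+1)N/(x−x₀)²` extends analytically across `x₀` and the odd Taylor
coefficients of this extension of orders `1, 3, …, 2N−1` vanish. -/
theorem stmt_8 (N : ℕ) (hN : 2 ≤ N) (x₀ μ : ℂ)
    (h : ℂ → ℂ) (r : ℝ) (hr : 0 < r)
    (hh : AnalyticOnNhd ℂ h (Metric.ball x₀ r \ {x₀}))
    (g : ℂ → ℂ) (hg : AnalyticAt ℂ g x₀)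
    (hgh : ∀ x ∈ Metric.ball x₀ r \ {x₀},
      g x = h x + (N * (N - 1) : ℂ) / (x - x₀) ^ 2)
    (hgodd : ∀ k : ℕ, Odd k → (k : ℤ) ≤ 2 * (N : ℤ) - 3 → iteratedDeriv k g x₀ = 0)
    (φ : ℂ → ℂ) (hφ : AnalyticAt ℂ φ x₀) (hφ1 : φ x₀ = 1)
    (hφodd : ∀ k : ℕ, Odd k → (k : ℤ) ≤ 2 * (N : ℤ) - 1 → iteratedDeriv k φ x₀ = 0)
    (u : ℂ → ℂ)
    (hu : ∀ᶠ x in nhdsWithin x₀ {x₀}ᶜ, u x = (x - x₀) ^ (N : ℤ) * φ x)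
    (hode : ∀ᶠ x in nhdsWithin x₀ {x₀}ᶜ, iteratedDeriv 2 u x + h x * u x = 0) :
    ∃ g' : ℂ → ℂ, AnalyticAt ℂ g' x₀ ∧
      (∀ᶠ x in nhdsWithin x₀ {x₀}ᶜ,
        g' x = (μ - h x - 2 * (deriv u x / u x) ^ 2)
          + ((N + 1) * N : ℂ) / (x - x₀) ^ 2) ∧
      (∀ k : ℕ, Odd k → (k : ℤ) ≤ 2 * (N : ℤ) - 1 → iteratedDeriv k g' x₀ = 0) :=
  stmt_8_general N hN x₀ μ h φ hφ hφ1 hφodd u hu hode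
end

section
/- Let b > 0 and define μ̃(z) = (1/(2b))·ψ₁(1 + z/(2b)) − 1/(z + 2b), where ψ₁ is the trigamma function (the derivative of the digamma function Γ'/Γ). Then for every θ with 0 < θ < π there exists a constant Ψ₀ > 0 such that |μ̃(z)| ≤ b·Ψ₀/|z + 2b|² for all z ≠ 0 in the closed sector {z ∈ ℂ : |arg z| ≤ θ}. -/
/-!
Put `ζ = z / (2b)` and `w = 1 + ζ`, so that `μ̃(z) = (2b)⁻¹ (ψ₁(w) - 1/w)` and `|z + 2b| = 2b |w|`.
Since `1/w = Σ 1/((w+n)(w+n+1))` telescopes, `ψ₁(w) - 1/w = Σ 1/((w+n)²(w+n+1))`.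
In the sector `|arg ζ| ≤ θ` one has `|ζ + t| ≥ cos(θ/2) (|ζ| + t)` for `t ≥ 0`, so with
`a = |ζ| + 1` the `n`-th term is at most `cos(θ/2)⁻³ / (a (a+n)(a+n+1))`; this real series
telescopes to `cos(θ/2)⁻³ / a² ≤ cos(θ/2)⁻³ / |w|²`, which gives `Ψ₀ = 2 / cos³(θ/2)`.
-/

open Complex

/-- The trigamma function `ψ₁(w) = (d/dw) Γ'(w)/Γ(w) = (d²/dw²) log Γ(w)`, given by its
standard (everywhere valid) series representation `ψ₁(w) = Σ_{n≥0} 1/(w+n)²`. -/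
noncomputable def trigamma (w : ℂ) : ℂ := ∑' n : ℕ, 1 / (w + (n : ℂ)) ^ 2

open Filter Topology

lemma Complex.cos_half_mul_le_norm_add_ofReal {θ : ℝ} (hθ : θ ≤ Real.pi) {ζ : ℂ}
    (hζ : |arg ζ| ≤ θ) {t : ℝ} (ht : 0 ≤ t) :
    Real.cos (θ / 2) * (‖ζ‖ + t) ≤ ‖ζ + t‖ := by
  have hre : ‖ζ‖ * Real.cos θ ≤ ζ.re := by
    rw [← norm_mul_cos_arg, ← Real.cos_abs (arg ζ)]
    gcongr
    exact Real.cos_le_cos_of_nonneg_of_le_pi (abs_nonneg _) hθ hζ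
  have hnorm_sq : ‖ζ + t‖ ^ 2 = ‖ζ‖ ^ 2 + 2 * t * ζ.re + t ^ 2 := by
    rw [Complex.sq_norm, Complex.sq_norm, normSq_apply, normSq_apply]
    simp only [add_re, add_im, ofReal_re, ofReal_im, add_zero]
    ring
  have hcos_sq : Real.cos (θ / 2) ^ 2 = 1 / 2 + Real.cos θ / 2 := by
    rw [Real.cos_sq, mul_div_cancel₀ _ two_ne_zero]
  refine le_of_pow_le_pow_left₀ two_ne_zero (norm_nonneg _) ?_
  rw [mul_pow, hcos_sq, hnorm_sq]
  -- the difference of the two sides is at least `sin² (θ / 2) * (‖ζ‖ - t) ^ 2`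
  nlinarith [mul_nonneg ht (sub_nonneg.2 hre), Real.cos_le_one θ,
    mul_nonneg (sub_nonneg.2 (Real.cos_le_one θ)) (sq_nonneg (‖ζ‖ - t))]

lemma summable_one_div_add_nat_sq (w : ℂ) : Summable fun n : ℕ => 1 / (w + n) ^ 2 := by
  have := (EisensteinSeries.linear_right_summable w 1 (k := 2) le_rfl).comp_injective
    Nat.cast_injective
  simpa [Function.comp_def] using this

lemma summable_one_div_add_nat_mul_add_nat_add_one (w : ℂ) :
    Summable fun n : ℕ => 1 / ((w + n) * (w + n + 1)) := by
  have := (EisensteinSeries.summable_linear_right_add_one_mul_linear_right w 1 1).comp_injective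
    Nat.cast_injective
  simpa [Function.comp_def, mul_comm] using this

lemma tendsto_one_div_add_nat (w : ℂ) : Tendsto (fun n : ℕ => 1 / (w + n)) atTop (𝓝 0) := by
  simpa using EisensteinSeries.tendsto_zero_inv_linear w 1

lemma hasSum_sub_succ_of_tendsto {E : Type*} [NormedAddCommGroup E] {f : ℕ → E} {l : E}
    (hs : Summable fun n => f n - f (n + 1)) (hf : Tendsto f atTop (𝓝 l)) :
    HasSum (fun n => f n - f (n + 1)) (f 0 - l) := by
  have hpartial : Tendsto (fun N => ∑ i ∈ Finset.range N, (f i - f (i + 1))) atTop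
      (𝓝 (f 0 - l)) := by
    simpa only [Finset.sum_range_sub'] using tendsto_const_nhds.sub hf
  exact tendsto_nhds_unique hs.hasSum.tendsto_sum_nat hpartial ▸ hs.hasSum

lemma hasSum_one_div_add_nat_mul_add_nat_add_one {w : ℂ} (hw : ∀ n : ℕ, w + n ≠ 0) :
    HasSum (fun n : ℕ => 1 / ((w + n) * (w + n + 1))) (1 / w) := by
  have key : ∀ n : ℕ, 1 / (w + n) - 1 / (w + (n + 1 : ℕ)) = 1 / ((w + n) * (w + n + 1)) := by
    intro n
    have h1 := hw n
    have h2 : w + n + 1 ≠ 0 := by simpa [add_assoc] using hw (n + 1)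
    rw [Nat.cast_succ, ← add_assoc, div_sub_div _ _ h1 h2]
    ring
  have := hasSum_sub_succ_of_tendsto (f := fun n : ℕ => 1 / (w + n))
    (by simpa only [key] using summable_one_div_add_nat_mul_add_nat_add_one w)
    (tendsto_one_div_add_nat w)
  simpa only [key, Nat.cast_zero, add_zero, sub_zero] using this

lemma hasSum_trigamma_sub_one_div {w : ℂ} (hw : ∀ n : ℕ, w + n ≠ 0) :
    HasSum (fun n : ℕ => 1 / ((w + n) ^ 2 * (w + n + 1))) (trigamma w - 1 / w) := by
  refine ((summable_one_div_add_nat_sq w).hasSum.sub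
    (hasSum_one_div_add_nat_mul_add_nat_add_one hw)).congr_fun fun n => ?_
  have h1 := hw n
  have h2 : w + n + 1 ≠ 0 := by simpa [add_assoc] using hw (n + 1)
  field_simp
  ring

lemma hasSum_one_div_add_nat_mul_add_nat_add_one_of_pos {a : ℝ} (ha : 0 < a) :
    HasSum (fun n : ℕ => 1 / ((a + n) * (a + n + 1))) (1 / a) := by
  have hw : ∀ n : ℕ, (a : ℂ) + n ≠ 0 := fun n => by exact_mod_cast (by positivity : a + n ≠ 0)
  exact_mod_cast hasSum_ofReal.mp (by exact_mod_cast hasSum_one_div_add_nat_mul_add_nat_add_one hw)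

lemma norm_trigamma_one_add_sub_one_div_le {θ : ℝ} (hθ : θ < Real.pi) {ζ : ℂ} (hζ : |arg ζ| ≤ θ) :
    ‖trigamma (1 + ζ) - 1 / (1 + ζ)‖ ≤ 1 / (Real.cos (θ / 2) ^ 3 * ‖1 + ζ‖ ^ 2) := by
  set d := Real.cos (θ / 2)
  set a := ‖ζ‖ + 1
  have hd : 0 < d := Real.cos_pos_of_mem_Ioo ⟨by linarith [abs_nonneg (arg ζ)], by linarith⟩
  have ha : 0 < a := by positivity
  have hsector : ∀ n : ℕ, d * (a + n) ≤ ‖1 + ζ + n‖ := fun n => by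
    rw [show 1 + ζ + n = ζ + ((n + 1 : ℝ) : ℂ) by push_cast; ring,
      show a + n = ‖ζ‖ + (n + 1) by ring]
    exact Complex.cos_half_mul_le_norm_add_ofReal hθ.le hζ (by positivity)
  have hsector_pos : ∀ n : ℕ, 0 < ‖1 + ζ + n‖ := fun n =>
    (by positivity : 0 < d * (a + n)).trans_le (hsector n)
  have hterm : ∀ n : ℕ, ‖1 / ((1 + ζ + n) ^ 2 * (1 + ζ + n + 1))‖ ≤
      1 / (d ^ 3 * a) * (1 / ((a + n) * (a + n + 1))) := fun n => by
    have h1 : d * (a + n + 1) ≤ ‖1 + ζ + n + 1‖ := by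
      simpa only [Nat.cast_succ, ← add_assoc] using hsector (n + 1)
    rw [norm_div, norm_one, norm_mul, norm_pow, one_div_mul_one_div]
    refine one_div_le_one_div_of_le (by positivity) ?_
    calc d ^ 3 * a * ((a + n) * (a + n + 1))
        ≤ d ^ 3 * (a + n) * ((a + n) * (a + n + 1)) := by
          gcongr
          exact le_add_of_nonneg_right n.cast_nonneg
      _ = (d * (a + n)) ^ 2 * (d * (a + n + 1)) := by ring
      _ ≤ ‖1 + ζ + n‖ ^ 2 * ‖1 + ζ + n + 1‖ := by
          gcongr
          exact hsector n
  have hw : ∀ n : ℕ, 1 + ζ + n ≠ 0 := fun n => norm_pos_iff.mp (hsector_pos n)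
  have hsum := (hasSum_trigamma_sub_one_div hw).norm_le_of_bounded
    ((hasSum_one_div_add_nat_mul_add_nat_add_one_of_pos ha).mul_left (1 / (d ^ 3 * a))) hterm
  have hnorm_pos : 0 < ‖1 + ζ‖ := by simpa using hsector_pos 0
  calc _ ≤ 1 / (d ^ 3 * a) * (1 / a) := by simpa using hsum
    _ = 1 / (d ^ 3 * a ^ 2) := by rw [one_div_mul_one_div, mul_assoc, ← sq]
    _ ≤ 1 / (d ^ 3 * ‖1 + ζ‖ ^ 2) := by
        gcongr
        exact (norm_add_le _ _).trans (by simp [a, add_comm])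

/-- sectorial bound for the kernel `μ̃`.
For `b > 0` and `μ̃(z) = (1/(2b)) ψ₁(1 + z/(2b)) − 1/(z + 2b)`, for every `θ` with
`0 < θ < π` there is `Ψ₀ > 0` such that `|μ̃(z)| ≤ b Ψ₀ / |z + 2b|²` for all `z ≠ 0`
in the closed sector `|arg z| ≤ θ`. -/
theorem stmt_13 (b : ℝ) (hb : 0 < b)
    (μt : ℂ → ℂ)
    (hμt : ∀ z : ℂ, μt z = 1 / (2 * (b : ℂ)) * trigamma (1 + z / (2 * (b : ℂ)))
      - 1 / (z + 2 * (b : ℂ))) :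
    ∀ θ : ℝ, 0 < θ → θ < Real.pi →
      ∃ Ψ₀ : ℝ, 0 < Ψ₀ ∧ ∀ z : ℂ, z ≠ 0 → |Complex.arg z| ≤ θ →
        ‖μt z‖ ≤ b * Ψ₀ / ‖z + 2 * (b : ℂ)‖ ^ 2 := by
  intro θ hθ hθπ
  have hd : 0 < Real.cos (θ / 2) := Real.cos_pos_of_mem_Ioo ⟨by linarith, by linarith⟩
  refine ⟨2 / Real.cos (θ / 2) ^ 3, by positivity, fun z _ hz => ?_⟩
  have h2b : (2 * (b : ℂ)) ≠ 0 := by exact_mod_cast (by positivity : 2 * b ≠ 0)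
  have hnorm_2b : ‖2 * (b : ℂ)‖ = 2 * b := by simp [abs_of_pos hb]
  set ζ := z / (2 * (b : ℂ))
  have hζ : |arg ζ| ≤ θ := by
    rwa [show ζ = z * ((2 * b)⁻¹ : ℝ) by push_cast; rfl, arg_mul_real (by positivity)]
  have hscale : z + 2 * (b : ℂ) = 2 * b * (1 + ζ) := by
    rw [mul_add, mul_div_cancel₀ _ h2b]; ring
  have hμ : μt z = 1 / (2 * (b : ℂ)) * (trigamma (1 + ζ) - 1 / (1 + ζ)) := by
    rw [hμt, hscale, ← one_div_mul_one_div (2 * (b : ℂ)), mul_sub]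
  calc ‖μt z‖ ≤ 1 / (2 * b) * (1 / (Real.cos (θ / 2) ^ 3 * ‖1 + ζ‖ ^ 2)) := by
        rw [hμ, norm_mul, norm_div, norm_one, hnorm_2b]
        gcongr
        exact norm_trigamma_one_add_sub_one_div_le hθπ hζ
    _ = b * (2 / Real.cos (θ / 2) ^ 3) / ‖z + 2 * (b : ℂ)‖ ^ 2 := by
        rw [hscale, norm_mul, hnorm_2b]
        field_simp
end
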